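/- arXiv:1003.2816 — 2 statements merged into one kernel-verified Lean document; each statement's English description precedes it below -/
import Mathlib

section
/- Let 𝒜 be a finite set of nonnegative d×d real matrices such that each A ∈ 𝒜 has a vector x_A ∈ ℝ^d with all coordinates strictly positive satisfying A x_A = ρ(A) x_A with ρ(A) > 0. Let ω = (ω_1, ω_2, …) be a sequence with ω_i ∈ 𝒜. For A, B ∈ 𝒜 let I_A(n) = #{1 ≤ i ≤ n : ω_i = A} and I_{AB}(n) = #{1 ≤ i ≤ n : ω_i = A and ω_{i+1} = B}, and assume the limits d(A) = lim_{n→∞} I_A(n)/n and d(AB) = lim_{n→∞} I_{AB}(n)/n exist for all A ∈ 𝒜 and all pairs A, B ∈ 𝒜. Set r̄(A,B) = max_j (x_B)_j/(x_A)_j and r̲(A,B) = min_j (x_B)_j/(x_A)_j, and define ρ̄(ω) = ∏_{A ∈ 𝒜} ρ(A)^{d(A)} · ∏_{A,B ∈ 𝒜} r̄(A,B)^{d(AB)} and ρ̲(ω) = ∏_{A ∈ 𝒜} ρ(A)^{d(A)} · ∏_{A,B ∈ 𝒜} r̲(A,B)^{d(AB)}. Then liminf_{n→∞} ‖ω_1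 ω_2 ⋯ ω_n‖₁^{1/n} ≥ ρ̲(ω) and limsup_{n→∞} ‖ω_1 ω_2 ⋯ ω_n‖₁^{1/n} ≤ ρ̄(ω). -/
open Filter

/-- The entrywise 1-norm `‖A‖₁ = ∑_{i,j} |a_{ij}|`. -/
def norm1 {d : ℕ} (A : Matrix (Fin d) (Fin d) ℝ) : ℝ :=
  ∑ i, ∑ j, |A i j|

/-- `r̄(A,B) = max_j (x_B)_j/(x_A)_j`. -/
noncomputable def rmax {d : ℕ} (u v : Fin d → ℝ) : ℝ := ⨆ j : Fin d, u j / v j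

/-- `r̲(A,B) = min_j (x_B)_j/(x_A)_j`. -/
noncomputable def rmin {d : ℕ} (u v : Fin d → ℝ) : ℝ := ⨅ j : Fin d, u j / v j

/-!
Write `P n = ω₀ ⋯ ω_{n-1}` and `xᵢ = x_{ωᵢ}`. Since `ω_n x_n = ρ(ω_n) x_n`, the vector
`P (n+1) x_n` equals `ρ(ω_n) · P n x_n`, and `x_n` is squeezed componentwise between
`r̲(ω_{n-1}, ω_n) x_{n-1}` and `r̄(ω_{n-1}, ω_n) x_{n-1}`; as `P n` is nonnegative, induction
sandwiches `P (n+1) x_n` between `∏ ρ(ωᵢ) ∏ r̲(ωᵢ, ωᵢ₊₁) · x₀` and `∏ ρ(ωᵢ) ∏ r̄(ωᵢ, ωᵢ₊₁) · x₀`.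
The finitely many `x_A` are bounded above and below by positive constants, so `‖P (n+1)‖₁`
is comparable to these products up to constant factors, which disappear under the `n`-th
root. Grouping the factors by letters and by pairs of consecutive letters turns the
exponents into the counts `I_A(n)` and `I_{AB}(n)`, whose frequencies converge.
-/

open Finset Topology Matrix

section Ratios

variable {d : ℕ} {u v : Fin d → ℝ}

lemma rmin_smul_le (hv : ∀ j, 0 < v j) : rmin u v • v ≤ u := fun j => by
  have h : rmin u v ≤ u j / v j := ciInf_le (Set.finite_range _).bddBelow j
  simpa [le_div_iff₀ (hv j)] using h

lemma le_rmax_smul (hv : ∀ j, 0 < v j) : u ≤ rmax u v • v := fun j => by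
  have h : u j / v j ≤ rmax u v :=
    le_ciSup (f := fun j => u j / v j) (Set.finite_range _).bddAbove j
  simpa [div_le_iff₀ (hv j)] using h

lemma rmin_nonneg (hu : ∀ j, 0 < u j) (hv : ∀ j, 0 < v j) : 0 ≤ rmin u v :=
  Real.iInf_nonneg fun j => (div_pos (hu j) (hv j)).le

lemma rmax_nonneg (hu : ∀ j, 0 < u j) (hv : ∀ j, 0 < v j) : 0 ≤ rmax u v :=
  Real.iSup_nonneg fun j => (div_pos (hu j) (hv j)).le

lemma rmin_pos (hd : 0 < d) (hu : ∀ j, 0 < u j) (hv : ∀ j, 0 < v j) : 0 < rmin u v := by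
  have : Nonempty (Fin d) := ⟨⟨0, hd⟩⟩
  obtain ⟨j, hj⟩ := exists_eq_ciInf_of_finite (f := fun j => u j / v j)
  rw [rmin, ← hj]
  exact div_pos (hu j) (hv j)

lemma rmax_pos (hd : 0 < d) (hu : ∀ j, 0 < u j) (hv : ∀ j, 0 < v j) : 0 < rmax u v :=
  (div_pos (hu ⟨0, hd⟩) (hv ⟨0, hd⟩)).trans_le
    (le_ciSup (Set.finite_range fun j => u j / v j).bddAbove ⟨0, hd⟩)

end Ratios

section Nonneg

variable {n : Type*} [Fintype n] {R : Type*} [Semiring R] [PartialOrder R] [IsOrderedRing R]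

lemma Matrix.mulVec_mono_of_nonneg {m : Type*} {P : Matrix m n R} (hP : ∀ i j, 0 ≤ P i j)
    {u v : n → R} (h : u ≤ v) : P *ᵥ u ≤ P *ᵥ v := fun i =>
  sum_le_sum fun j _ => mul_le_mul_of_nonneg_left (h j) (hP i j)

lemma Matrix.list_prod_nonneg [DecidableEq n] {L : List (Matrix n n R)}
    (hL : ∀ A ∈ L, ∀ i j, 0 ≤ A i j) : ∀ i j, 0 ≤ L.prod i j := by
  induction L with
  | nil =>
    intro i j
    rw [List.prod_nil, Matrix.one_apply]
    split_ifs <;> simp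
  | cons A L ih =>
    intro i j
    rw [List.prod_cons, Matrix.mul_apply]
    exact sum_nonneg fun k _ => mul_nonneg (hL A (by simp) i k)
      (ih (fun B hB => hL B (List.mem_cons_of_mem A hB)) k j)

end Nonneg

section Norm

variable {d : ℕ} {P : Matrix (Fin d) (Fin d) ℝ} {u w : Fin d → ℝ} {m c : ℝ}

lemma norm1_eq_sum_of_nonneg (hP : ∀ i j, 0 ≤ P i j) : norm1 P = ∑ i, ∑ j, P i j :=
  sum_congr rfl fun i _ => sum_congr rfl fun j _ => abs_of_nonneg (hP i j)

lemma norm1_nonneg : 0 ≤ norm1 P :=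
  sum_nonneg fun _ _ => sum_nonneg fun _ _ => abs_nonneg _

lemma norm1_le_of_mulVec_le (hP : ∀ i j, 0 ≤ P i j) (hm : 0 < m) (hu : ∀ j, m ≤ u j)
    (h : P *ᵥ u ≤ c • w) : norm1 P ≤ (∑ k, w k) / m * c := by
  rw [div_mul_eq_mul_div, le_div_iff₀' hm]
  calc m * norm1 P = ∑ i, ∑ j, P i j * m := by
        rw [norm1_eq_sum_of_nonneg hP, mul_comm, sum_mul]
        simp only [sum_mul]
    _ ≤ ∑ i, (P *ᵥ u) i :=
        sum_le_sum fun i _ => sum_le_sum fun j _ => mul_le_mul_of_nonneg_left (hu j) (hP i j)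
    _ ≤ ∑ i, (c • w) i := sum_le_sum fun i _ => h i
    _ = (∑ k, w k) * c := by simp [mul_sum, mul_comm]

lemma le_norm1_of_le_mulVec (hP : ∀ i j, 0 ≤ P i j) (hm : 0 < m) (hu : ∀ j, u j ≤ m)
    (h : c • w ≤ P *ᵥ u) : (∑ k, w k) / m * c ≤ norm1 P := by
  rw [div_mul_eq_mul_div, div_le_iff₀' hm]
  calc (∑ k, w k) * c = ∑ i, (c • w) i := by simp [mul_sum, mul_comm]
    _ ≤ ∑ i, (P *ᵥ u) i := sum_le_sum fun i _ => h i
    _ ≤ ∑ i, ∑ j, P i j * m := sum_le_sum fun i _ =>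
        (sum_le_sum fun j _ => mul_le_mul_of_nonneg_left (hu j) (hP i j) :
          ∑ j, P i j * u j ≤ _)
    _ = m * norm1 P := by
        rw [norm1_eq_sum_of_nonneg hP, mul_comm, sum_mul]
        simp only [sum_mul]

end Norm

section EigenChain

variable {d : ℕ} {M : ℕ → Matrix (Fin d) (Fin d) ℝ} {v : ℕ → Fin d → ℝ} {μ : ℕ → ℝ} {m : ℝ}

lemma prod_range_succ_mulVec (n : ℕ) (w : Fin d → ℝ) :
    ((List.range (n + 1)).map M).prod *ᵥ w = ((List.range n).map M).prod *ᵥ (M n *ᵥ w) := by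
  rw [List.range_succ, List.map_append, List.prod_append, mulVec_mulVec]
  simp

lemma prod_range_map_nonneg (hM : ∀ i a b, 0 ≤ M i a b) (n : ℕ) :
    ∀ a b, 0 ≤ ((List.range n).map M).prod a b :=
  list_prod_nonneg (by simpa using fun i _ => hM i)

lemma prod_range_mulVec_eigenvector_le (hM : ∀ i a b, 0 ≤ M i a b) (hv : ∀ i j, 0 < v i j)
    (hμ : ∀ i, 0 ≤ μ i) (heig : ∀ i, M i *ᵥ v i = μ i • v i) (n : ℕ) :
    ((List.range (n + 1)).map M).prod *ᵥ v n ≤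
      ((∏ i ∈ range (n + 1), μ i) * ∏ i ∈ range n, rmax (v (i + 1)) (v i)) • v 0 := by
  induction n with
  | zero => simp [heig 0]
  | succ n ih =>
    set P := ((List.range (n + 1)).map M).prod
    have hr : 0 ≤ rmax (v (n + 1)) (v n) := rmax_nonneg (hv _) (hv _)
    have hPv := mulVec_mono_of_nonneg (prod_range_map_nonneg hM (n + 1))
      (le_rmax_smul (u := v (n + 1)) (hv n))
    rw [mulVec_smul] at hPv
    calc ((List.range (n + 1 + 1)).map M).prod *ᵥ v (n + 1)
        = μ (n + 1) • (P *ᵥ v (n + 1)) := by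
          rw [prod_range_succ_mulVec, heig, mulVec_smul]
      _ ≤ μ (n + 1) • (rmax (v (n + 1)) (v n) • (P *ᵥ v n)) :=
          smul_le_smul_of_nonneg_left hPv (hμ _)
      _ ≤ μ (n + 1) • (rmax (v (n + 1)) (v n) •
            ((∏ i ∈ range (n + 1), μ i) * ∏ i ∈ range n, rmax (v (i + 1)) (v i)) • v 0) :=
          smul_le_smul_of_nonneg_left (smul_le_smul_of_nonneg_left ih hr) (hμ _)
      _ = _ := by
          simp only [smul_smul, prod_range_succ]
          ring_nf

lemma le_prod_range_mulVec_eigenvector (hM : ∀ i a b, 0 ≤ M i a b) (hv : ∀ i j, 0 < v i j)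
    (hμ : ∀ i, 0 ≤ μ i) (heig : ∀ i, M i *ᵥ v i = μ i • v i) (n : ℕ) :
    ((∏ i ∈ range (n + 1), μ i) * ∏ i ∈ range n, rmin (v (i + 1)) (v i)) • v 0 ≤
      ((List.range (n + 1)).map M).prod *ᵥ v n := by
  induction n with
  | zero => simp [heig 0]
  | succ n ih =>
    set P := ((List.range (n + 1)).map M).prod
    have hr : 0 ≤ rmin (v (n + 1)) (v n) := rmin_nonneg (hv _) (hv _)
    have hPv := mulVec_mono_of_nonneg (prod_range_map_nonneg hM (n + 1))
      (rmin_smul_le (u := v (n + 1)) (hv n))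
    rw [mulVec_smul] at hPv
    calc ((∏ i ∈ range (n + 1 + 1), μ i) * ∏ i ∈ range (n + 1), rmin (v (i + 1)) (v i)) • v 0
        = μ (n + 1) • (rmin (v (n + 1)) (v n) •
            ((∏ i ∈ range (n + 1), μ i) * ∏ i ∈ range n, rmin (v (i + 1)) (v i)) • v 0) := by
          simp only [smul_smul, prod_range_succ]
          ring_nf
      _ ≤ μ (n + 1) • (rmin (v (n + 1)) (v n) • (P *ᵥ v n)) :=
          smul_le_smul_of_nonneg_left (smul_le_smul_of_nonneg_left ih hr) (hμ _)
      _ ≤ μ (n + 1) • (P *ᵥ v (n + 1)) := smul_le_smul_of_nonneg_left hPv (hμ _)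
      _ = ((List.range (n + 1 + 1)).map M).prod *ᵥ v (n + 1) := by
          rw [prod_range_succ_mulVec (n + 1), heig, mulVec_smul]

lemma norm1_prod_range_le (hM : ∀ i a b, 0 ≤ M i a b) (hv : ∀ i j, 0 < v i j)
    (hμ : ∀ i, 0 ≤ μ i) (heig : ∀ i, M i *ᵥ v i = μ i • v i) (hm : 0 < m)
    (hvm : ∀ i j, m ≤ v i j) (n : ℕ) :
    norm1 ((List.range (n + 1)).map M).prod ≤
      (∑ k, v 0 k) / m * ((∏ i ∈ range (n + 1), μ i) * ∏ i ∈ range n, rmax (v (i + 1)) (v i)) :=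
  norm1_le_of_mulVec_le (prod_range_map_nonneg hM (n + 1)) hm (hvm n)
    (prod_range_mulVec_eigenvector_le hM hv hμ heig n)

lemma le_norm1_prod_range (hM : ∀ i a b, 0 ≤ M i a b) (hv : ∀ i j, 0 < v i j)
    (hμ : ∀ i, 0 ≤ μ i) (heig : ∀ i, M i *ᵥ v i = μ i • v i) (hm : 0 < m)
    (hvm : ∀ i j, v i j ≤ m) (n : ℕ) :
    (∑ k, v 0 k) / m * ((∏ i ∈ range (n + 1), μ i) * ∏ i ∈ range n, rmin (v (i + 1)) (v i)) ≤
      norm1 ((List.range (n + 1)).map M).prod :=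
  le_norm1_of_le_mulVec (prod_range_map_nonneg hM (n + 1)) hm (hvm n)
    (le_prod_range_mulVec_eigenvector hM hv hμ heig n)

end EigenChain

lemma prod_range_comp_eq_prod_pow_ncard {α M : Type*} [CommMonoid M] (s : Finset α)
    {ω : ℕ → α} (hω : ∀ i, ω i ∈ s) (g : α → M) (n : ℕ) :
    ∏ i ∈ range n, g (ω i) = ∏ a ∈ s, g a ^ {i | i < n ∧ ω i = a}.ncard := by
  classical
  rw [← prod_fiberwise_of_maps_to' (fun i _ => hω i) g]
  refine prod_congr rfl fun a _ => ?_
  rw [prod_const, ← Set.ncard_coe_finset]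
  congr
  ext i
  simp

lemma prod_range_pairs_eq_prod_pow_ncard {α M : Type*} [CommMonoid M] (s : Finset α)
    {ω : ℕ → α} (hω : ∀ i, ω i ∈ s) (g : α → α → M) (n : ℕ) :
    ∏ i ∈ range n, g (ω i) (ω (i + 1)) =
      ∏ p ∈ s ×ˢ s, g p.1 p.2 ^ {i | i < n ∧ ω i = p.1 ∧ ω (i + 1) = p.2}.ncard := by
  simpa only [Prod.ext_iff] using prod_range_comp_eq_prod_pow_ncard (s ×ˢ s)
    (ω := fun i => (ω i, ω (i + 1))) (fun i => mem_product.2 ⟨hω i, hω (i + 1)⟩)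
    (fun p => g p.1 p.2) n

lemma tendsto_div_add_one_of_tendsto_div {u : ℕ → ℝ} {δ : ℝ}
    (h : Tendsto (fun n => u n / n) atTop (𝓝 δ)) :
    Tendsto (fun n => u n / (n + 1)) atTop (𝓝 δ) := by
  have h' := h.mul (tendsto_natCast_div_add_atTop (1 : ℝ))
  rw [mul_one] at h'
  refine h'.congr' ?_
  filter_upwards [eventually_ne_atTop 0] with n hn
  field_simp

lemma tendsto_prod_pow_rpow {ι : Type*} (s : Finset ι) {a : ι → ℝ} (ha : ∀ i ∈ s, 0 < a i)
    {N : ι → ℕ → ℕ} {e : ℕ → ℝ} {δ : ι → ℝ}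
    (hN : ∀ i ∈ s, Tendsto (fun n => (N i n : ℝ) * e n) atTop (𝓝 (δ i))) :
    Tendsto (fun n => (∏ i ∈ s, a i ^ N i n) ^ e n) atTop (𝓝 (∏ i ∈ s, a i ^ δ i)) := by
  have hsplit : ∀ n, (∏ i ∈ s, a i ^ N i n) ^ e n = ∏ i ∈ s, a i ^ ((N i n : ℝ) * e n) :=
    fun n => by
      rw [← Real.finsetProd_rpow _ _ fun i hi => pow_nonneg (ha i hi).le _]
      refine prod_congr rfl fun i hi => ?_
      rw [← Real.rpow_natCast, ← Real.rpow_mul (ha i hi).le]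
  simp only [hsplit]
  exact tendsto_finsetProd s fun i hi =>
    (Real.continuousAt_const_rpow (ha i hi).ne').tendsto.comp (hN i hi)

/- The exponents are shifted as in a word `ω₀ ⋯ ωₙ`, which has `n + 1` letters but only `n`
pairs of consecutive letters. -/
lemma tendsto_mul_prod_pow_rpow {ι κ : Type*} (s : Finset ι) (t : Finset κ) {K : ℝ}
    (hK : 0 < K) {a : ι → ℝ} {b : κ → ℝ} (ha : ∀ i ∈ s, 0 < a i) (hb : ∀ j ∈ t, 0 < b j)
    {N : ι → ℕ → ℕ} {N' : κ → ℕ → ℕ} {δ : ι → ℝ} {δ' : κ → ℝ}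
    (hN : ∀ i ∈ s, Tendsto (fun n => (N i n : ℝ) / n) atTop (𝓝 (δ i)))
    (hN' : ∀ j ∈ t, Tendsto (fun n => (N' j n : ℝ) / n) atTop (𝓝 (δ' j))) :
    Tendsto (fun n : ℕ => (K * ((∏ i ∈ s, a i ^ N i (n + 1)) * ∏ j ∈ t, b j ^ N' j n)) ^
      (1 / ((n : ℝ) + 1))) atTop (𝓝 ((∏ i ∈ s, a i ^ δ i) * ∏ j ∈ t, b j ^ δ' j)) := by
  have he : Tendsto (fun n : ℕ => 1 / ((n : ℝ) + 1)) atTop (𝓝 0) :=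
    tendsto_one_div_add_atTop_nhds_zero_nat
  have hK' : Tendsto (fun n : ℕ => K ^ (1 / ((n : ℝ) + 1))) atTop (𝓝 1) := by
    have h := (Real.continuousAt_const_rpow hK.ne').tendsto.comp he
    rwa [Real.rpow_zero] at h
  have hA := tendsto_prod_pow_rpow s ha (N := fun i n => N i (n + 1))
    (e := fun n => 1 / ((n : ℝ) + 1)) fun i hi =>
      ((tendsto_add_atTop_iff_nat 1).2 (hN i hi)).congr fun n => by push_cast; ring
  have hB := tendsto_prod_pow_rpow t hb (N := N')
    (e := fun n => 1 / ((n : ℝ) + 1)) fun j hj =>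
      (tendsto_div_add_one_of_tendsto_div (hN' j hj)).congr fun n => by ring
  have hprod : ∀ n : ℕ, (K * ((∏ i ∈ s, a i ^ N i (n + 1)) * ∏ j ∈ t, b j ^ N' j n)) ^
      (1 / ((n : ℝ) + 1)) = K ^ (1 / ((n : ℝ) + 1)) *
        ((∏ i ∈ s, a i ^ N i (n + 1)) ^ (1 / ((n : ℝ) + 1)) *
          (∏ j ∈ t, b j ^ N' j n) ^ (1 / ((n : ℝ) + 1))) := fun n => by
    have hA0 : 0 ≤ ∏ i ∈ s, a i ^ N i (n + 1) := prod_nonneg fun i hi => pow_nonneg (ha i hi).le _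
    have hB0 : 0 ≤ ∏ j ∈ t, b j ^ N' j n := prod_nonneg fun j hj => pow_nonneg (hb j hj).le _
    rw [Real.mul_rpow hK.le (mul_nonneg hA0 hB0), Real.mul_rpow hA0 hB0]
  have h := hK'.mul (hA.mul hB)
  rw [one_mul] at h
  exact h.congr fun n => (hprod n).symm

lemma le_liminf_and_limsup_le_of_tendsto {f L U : ℕ → ℝ} {l u : ℝ}
    (hL : Tendsto L atTop (𝓝 l)) (hU : Tendsto U atTop (𝓝 u))
    (hLf : ∀ᶠ n in atTop, L n ≤ f n) (hfU : ∀ᶠ n in atTop, f n ≤ U n) :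
    l ≤ liminf f atTop ∧ limsup f atTop ≤ u := by
  have hf_above : IsBoundedUnder (· ≤ ·) atTop f := hU.isBoundedUnder_le.mono_le hfU
  have hf_below : IsBoundedUnder (· ≥ ·) atTop f := hL.isBoundedUnder_ge.mono_ge hLf
  constructor
  · rw [← hL.liminf_eq]
    exact liminf_le_liminf hLf hL.isBoundedUnder_ge hf_above.isCoboundedUnder_ge
  · rw [← hU.limsup_eq]
    exact limsup_le_limsup hfU hf_below.isCoboundedUnder_le hU.isBoundedUnder_le

lemma exists_pos_bounds_of_pos {ι : Type*} (s : Finset ι) {f : ι → ℝ} (hf : ∀ i ∈ s, 0 < f i) :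
    ∃ m M : ℝ, 0 < m ∧ 0 < M ∧ ∀ i ∈ s, m ≤ f i ∧ f i ≤ M := by
  rcases s.eq_empty_or_nonempty with rfl | hs
  · exact ⟨1, 1, one_pos, one_pos, by simp⟩
  obtain ⟨i₀, hi₀, hmin⟩ := s.exists_min_image f hs
  obtain ⟨i₁, hi₁, hmax⟩ := s.exists_max_image f hs
  exact ⟨f i₀, f i₁, hf i₀ hi₀, hf i₁ hi₁, fun i hi => ⟨hmin i hi, hmax i hi⟩⟩

/-- Bounds on the exponential growth rate of
`‖ω_1 ω_2 ⋯ ω_n‖₁^{1/n}` for a sequence `ω` drawn from a finite set `𝒜` of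
nonnegative matrices with positive eigenvectors, in terms of the densities of
letters and of two-letter words in `ω`:
`ρ̲(ω) ≤ liminf ‖ω_1 ⋯ ω_n‖₁^{1/n}` and `limsup ‖ω_1 ⋯ ω_n‖₁^{1/n} ≤ ρ̄(ω)`. -/
theorem stmt12 {d : ℕ} (hd : 0 < d) (𝒜 : Finset (Matrix (Fin d) (Fin d) ℝ))
    (x : Matrix (Fin d) (Fin d) ℝ → Fin d → ℝ)
    (ρ : Matrix (Fin d) (Fin d) ℝ → ℝ)
    (hA : ∀ A ∈ 𝒜, ∀ i j, 0 ≤ A i j)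
    (hx : ∀ A ∈ 𝒜, ∀ i, 0 < x A i)
    (hρ : ∀ A ∈ 𝒜, 0 < ρ A)
    (heig : ∀ A ∈ 𝒜, A.mulVec (x A) = ρ A • x A)
    (ω : ℕ → Matrix (Fin d) (Fin d) ℝ) (hω : ∀ i, ω i ∈ 𝒜)
    (dA : Matrix (Fin d) (Fin d) ℝ → ℝ)
    (dAB : Matrix (Fin d) (Fin d) ℝ → Matrix (Fin d) (Fin d) ℝ → ℝ)
    (hdA : ∀ A ∈ 𝒜,
      Tendsto (fun n => (({i | i < n ∧ ω i = A} : Set ℕ).ncard : ℝ) / n)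
        atTop (nhds (dA A)))
    (hdAB : ∀ A ∈ 𝒜, ∀ B ∈ 𝒜,
      Tendsto (fun n => (({i | i < n ∧ ω i = A ∧ ω (i + 1) = B} : Set ℕ).ncard : ℝ) / n)
        atTop (nhds (dAB A B))) :
    (∏ A ∈ 𝒜, ρ A ^ dA A) *
        (∏ A ∈ 𝒜, ∏ B ∈ 𝒜, rmin (x B) (x A) ^ dAB A B) ≤
      liminf (fun n => norm1 ((List.range n).map ω).prod ^ (1 / (n : ℝ))) atTop ∧
    limsup (fun n => norm1 ((List.range n).map ω).prod ^ (1 / (n : ℝ))) atTop ≤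
      (∏ A ∈ 𝒜, ρ A ^ dA A) *
        (∏ A ∈ 𝒜, ∏ B ∈ 𝒜, rmax (x B) (x A) ^ dAB A B) := by
  obtain ⟨m, M, hm, hM, hxbd⟩ := exists_pos_bounds_of_pos (𝒜 ×ˢ univ)
    (f := fun p => x p.1 p.2) fun p hp => hx _ (mem_product.1 hp).1 _
  have hxω : ∀ i j, 0 < x (ω i) j := fun i => hx _ (hω i)
  have hωnn : ∀ i a b, 0 ≤ ω i a b := fun i => hA _ (hω i)
  have hρω : ∀ i, 0 ≤ ρ (ω i) := fun i => (hρ _ (hω i)).le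
  have heigω : ∀ i, ω i *ᵥ x (ω i) = ρ (ω i) • x (ω i) := fun i => heig _ (hω i)
  have hxωbd : ∀ i j, m ≤ x (ω i) j ∧ x (ω i) j ≤ M := fun i j =>
    hxbd (ω i, j) (mem_product.2 ⟨hω i, mem_univ j⟩)
  have hc : 0 < ∑ k, x (ω 0) k := sum_pos (fun k _ => hxω 0 k) (univ_nonempty_iff.2 ⟨⟨0, hd⟩⟩)
  have hxp : ∀ p ∈ 𝒜 ×ˢ 𝒜, (∀ j, 0 < x p.1 j) ∧ ∀ j, 0 < x p.2 j := fun p hp =>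
    ⟨hx _ (mem_product.1 hp).1, hx _ (mem_product.1 hp).2⟩
  have hdp : ∀ p ∈ 𝒜 ×ˢ 𝒜, _ := fun p hp =>
    hdAB p.1 (mem_product.1 hp).1 p.2 (mem_product.1 hp).2
  have hU := tendsto_mul_prod_pow_rpow 𝒜 (𝒜 ×ˢ 𝒜) (div_pos hc hm) hρ
    (fun p hp => rmax_pos hd (hxp p hp).2 (hxp p hp).1) hdA hdp
  have hL := tendsto_mul_prod_pow_rpow 𝒜 (𝒜 ×ˢ 𝒜) (div_pos hc hM) hρ
    (fun p hp => rmin_pos hd (hxp p hp).2 (hxp p hp).1) hdA hdp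
  rw [prod_product] at hU hL
  rw [← liminf_nat_add _ 1, ← limsup_nat_add _ 1]
  refine le_liminf_and_limsup_le_of_tendsto hL hU (.of_forall fun n => ?_) (.of_forall fun n => ?_)
  · have h := le_norm1_prod_range hωnn hxω hρω heigω hM (fun i j => (hxωbd i j).2) n
    rw [prod_range_comp_eq_prod_pow_ncard 𝒜 hω,
      prod_range_pairs_eq_prod_pow_ncard 𝒜 hω fun A B => rmin (x B) (x A)] at h
    push_cast
    refine Real.rpow_le_rpow (mul_nonneg (by positivity) (mul_nonneg ?_ ?_)) h (by positivity)
    · exact prod_nonneg fun A hA' => pow_nonneg (hρ A hA').le _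
    · exact prod_nonneg fun p hp => pow_nonneg (rmin_nonneg (hxp p hp).2 (hxp p hp).1) _
  · have h := norm1_prod_range_le hωnn hxω hρω heigω hm (fun i j => (hxωbd i j).1) n
    rw [prod_range_comp_eq_prod_pow_ncard 𝒜 hω,
      prod_range_pairs_eq_prod_pow_ncard 𝒜 hω fun A B => rmax (x B) (x A)] at h
    push_cast
    exact Real.rpow_le_rpow norm1_nonneg h (by positivity)
end

section
/- Let c > 0 and let {F_k} be d×d real matrices with all entries strictly positive such that for each k the ratio of the smallest entry of F_k to the largest entry of F_k is at least c. Then for all n ≤ m, the product G = F_m F_{m-1} ⋯ F_n satisfies G_{p,v} ≥ c · G_{p,w} for all indices p, v, w; that is, within each row of any such product, the ratio of any two entries is at least c. -/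
open Filter

/-- The backward (decreasing-index) product `F_m F_{m-1} ⋯ F_n`. -/
def revProd {d : ℕ} (F : ℕ → Matrix (Fin d) (Fin d) ℝ) (n m : ℕ) :
    Matrix (Fin d) (Fin d) ℝ :=
  (((List.range' n (m + 1 - n)).map F).reverse).prod

lemma revProd_self {d : ℕ} (F : ℕ → Matrix (Fin d) (Fin d) ℝ) (n : ℕ) :
    revProd F n n = F n := by
  simp [revProd]

lemma revProd_succ {d : ℕ} (F : ℕ → Matrix (Fin d) (Fin d) ℝ) (n m : ℕ) (h : n ≤ m) :
    revProd F n (m + 1) = F (m + 1) * revProd F n m := by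
  have h1 : m + 1 + 1 - n = (m + 1 - n) + 1 := by omega
  have h2 : n + 1 * (m + 1 - n) = m + 1 := by omega
  rw [revProd, h1, List.range'_concat, List.map_append, List.reverse_append, h2]
  simp [revProd]

/-- If each `F_k` is strictly positive and its smallest entry is at
least `c` times its largest entry, then in any product `G = F_m F_{m-1} ⋯ F_n` (with
`n ≤ m`) every entry of a row is at least `c` times any other entry of that row:
`G_{p,v} ≥ c · G_{p,w}` for all `p, v, w`. -/
theorem stmt13 {d : ℕ} (c : ℝ) (hc : 0 < c) (F : ℕ → Matrix (Fin d) (Fin d) ℝ)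
    (hpos : ∀ k i j, 0 < F k i j)
    (hratio : ∀ k i j p q, c * F k i j ≤ F k p q) :
    ∀ n m, n ≤ m → ∀ p v w : Fin d,
      c * revProd F n m p w ≤ revProd F n m p v := by
  intro n m hnm
  induction m, hnm using Nat.le_induction with
  | base => intro p v w; rw [revProd_self]; exact hratio n p w p v
  | succ m hm ih =>
    intro p v w
    rw [revProd_succ F n m hm]
    simp only [Matrix.mul_apply, Finset.mul_sum]
    apply Finset.sum_le_sum
    intro j _
    rw [mul_left_comm]
    exact mul_le_mul_of_nonneg_left (ih j v w) (hpos (m + 1) p j).le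
end
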